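/- Let G be a finite group, A and B distinct subgroups with A ≅ B ≅ AGL₂(3), G = ⟨A,B⟩, S ∈ Syl₃(A ∩ B), and N_G(Z(S)) ≤ A. Then A ∩ B = N_A(S) = N_B(S) = N_G(S). -/

import Mathlib

abbrev GL23 := Matrix.GeneralLinearGroup (Fin 2) (ZMod 3)
abbrev V23 := Multiplicative (Fin 2 → ZMod 3)

def glAddAut (g : GL23) : (Fin 2 → ZMod 3) ≃+ (Fin 2 → ZMod 3) where
  toFun v := (g : Matrix (Fin 2) (Fin 2) (ZMod 3)).mulVec v
  invFun v := ((g⁻¹ : GL23) : Matrix (Fin 2) (Fin 2) (ZMod 3)).mulVec v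
  left_inv v := by
    have hd : IsUnit ((g : Matrix (Fin 2) (Fin 2) (ZMod 3)).det) :=
      (Matrix.isUnit_iff_isUnit_det _).mp g.isUnit
    beta_reduce
    rw [Matrix.mulVec_mulVec, Units.inv_mul, Matrix.one_mulVec]
  right_inv v := by
    have hd : IsUnit ((g : Matrix (Fin 2) (Fin 2) (ZMod 3)).det) :=
      (Matrix.isUnit_iff_isUnit_det _).mp g.isUnit
    beta_reduce
    rw [Matrix.mulVec_mulVec, Units.mul_inv, Matrix.one_mulVec]
  map_add' x y := Matrix.mulVec_add _ x y

def aglPhi : GL23 →* MulAut V23 where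
  toFun g := AddEquiv.toMultiplicative (glAddAut g)
  map_one' := by
    ext v
    simp [glAddAut, AddEquiv.toMultiplicative]
  map_mul' g h := by
    ext v i
    simp [glAddAut, AddEquiv.toMultiplicative, Matrix.mulVec_mulVec] <;>
      fin_cases i <;> simp [Matrix.mul_apply, Fin.sum_univ_two] <;> ring

/-- The affine group `AGL₂(3) = (F₃)² ⋊ GL₂(3)`. -/
def AGL23 := SemidirectProduct V23 GL23 aglPhi

instance : Group AGL23 := SemidirectProduct.instGroup


/-- `S` is a Sylow 3-subgroup of the subgroup `K`: `S` is a 3-subgroup of `K`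
maximal among 3-subgroups of `K`. -/
def IsSylow3In {G : Type*} [Group G] (S K : Subgroup G) : Prop :=
  S ≤ K ∧ IsPGroup 3 ↥S ∧
    ∀ T : Subgroup G, IsPGroup 3 ↥T → T ≤ K → S ≤ T → T = S

/-!
Since `Z(S)` is characteristic in `S`, the hypothesis gives `N := N_G(S) ≤ A`. Then `N_B(S) ≤ A ∩ B`,
and as a `3`-subgroup strictly containing `S` would have a strictly larger normalizer in it,
`S` is a Sylow subgroup of `B`, hence (by order) also of `A`. In `AGL₂(3)` the Sylow `3`-subgroups
number `4` (as in `GL₂(3)`, the translations forming a normal `3`-subgroup), so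
`|A : N| = |B : N ∩ B| = 4`; since `|A| = |B|` this forces `N ≤ B`. Finally
`|A ∩ B : N| · |B : A ∩ B| = |B : N| = 4`, the first factor is the number of Sylow `3`-subgroups of
`A ∩ B`, which is `1` modulo `3`, and the second is not `1` as `A ≠ B`; so `A ∩ B = N`.
-/

open Subgroup

section SylowTransfer

variable {G : Type*} [Group G]

theorem Subgroup.normalizer_le_normalizer_map_subtype_center (S : Subgroup G) :
    normalizer (S : Set G) ≤ normalizer (((center S).map S.subtype : Subgroup G) : Set G) := by
  have hZ : (center S).map S.subtype = S ⊓ centralizer S := by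
    ext x
    simp [mem_center_iff, mem_centralizer_iff, and_comm]
  rw [hZ]
  exact (le_inf le_rfl (le_normalizer_of_normal_subgroupOf (centralizer_le_normalizer _))).trans
    inf_normalizer_le_normalizer_inf

theorem Subgroup.notMem_zpowers_of_not_commute {g h : G} (hc : ¬ Commute g h) : h ∉ zpowers g :=
  fun ⟨k, hk⟩ => hc (hk ▸ (Commute.refl g).zpow_right k)

theorem IsPGroup.eq_of_le_of_inf_normalizer_le [Finite G] {p : ℕ} [Fact p.Prime]
    {S H K T : Subgroup G} (hmax : ∀ T : Subgroup G, IsPGroup p T → T ≤ H → S ≤ T → T = S)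
    (hN : K ⊓ normalizer (S : Set G) ≤ H) (hT : IsPGroup p T) (hTK : T ≤ K) (hST : S ≤ T) :
    T = S := by
  have hTN : T ⊓ normalizer (S : Set G) = S :=
    hmax _ (hT.to_le inf_le_left) ((inf_le_inf_right _ hTK).trans hN) (le_inf hST le_normalizer)
  have := hT.isNilpotent
  have hself : normalizer (S.subgroupOf T : Set T) = S.subgroupOf T := by
    rw [← subgroupOf_normalizer_eq hST, ← inf_subgroupOf_left, hTN]
  have htop := normalizerCondition_iff_only_full_group_self_normalizing.mp
    Group.normalizerCondition_of_isNilpotent _ hself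
  exact le_antisymm (subgroupOf_eq_top.mp htop) hST

theorem IsSylow3In.of_le_of_inf_normalizer_le [Finite G] {S H K : Subgroup G}
    (h : IsSylow3In S H) (hHK : H ≤ K) (hN : K ⊓ normalizer (S : Set G) ≤ H) :
    IsSylow3In S K :=
  ⟨h.1.trans hHK, h.2.1, fun _ hT hTK hST => hT.eq_of_le_of_inf_normalizer_le h.2.2 hN hTK hST⟩

def IsSylow3In.toSylow {S K : Subgroup G} (h : IsSylow3In S K) : Sylow 3 K where
  toSubgroup := S.subgroupOf K
  isPGroup' := h.2.1.of_equiv (subgroupOfEquivOfLe h.1).symm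
  is_maximal' {Q} hQ hle := by
    have hSQ : S ≤ Q.map K.subtype := by
      rw [← map_subgroupOf_eq_of_le h.1]
      exact map_mono hle
    rw [← h.2.2 _ (hQ.map K.subtype) (map_subtype_le Q) hSQ]
    exact (comap_map_eq_self_of_injective K.subtype_injective Q).symm

theorem Subgroup.relIndex_normalizer_eq_card_sylow [Finite G] {p : ℕ} [Fact p.Prime]
    {S K : Subgroup G} (hSK : S ≤ K) (P : Sylow p K) (hP : (P : Subgroup K) = S.subgroupOf K) :
    (normalizer (S : Set G)).relIndex K = Nat.card (Sylow p K) := by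
  rw [relIndex, subgroupOf_normalizer_eq hSK, ← hP]
  exact P.card_eq_index_normalizer.symm

theorem IsSylow3In.relIndex_normalizer [Finite G] {S K : Subgroup G} (h : IsSylow3In S K) :
    (normalizer (S : Set G)).relIndex K = Nat.card (Sylow 3 K) :=
  relIndex_normalizer_eq_card_sylow h.1 h.toSylow rfl

theorem IsSylow3In.relIndex_normalizer_of_card_eq [Finite G] {S K L : Subgroup G}
    (h : IsSylow3In S K) (hSL : S ≤ L) (hKL : Nat.card K = Nat.card L) :
    (normalizer (S : Set G)).relIndex L = Nat.card (Sylow 3 L) := by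
  have hcard : Nat.card (S.subgroupOf L) = 3 ^ (Nat.card L).factorization 3 := by
    rw [← hKL, ← h.toSylow.card_eq_multiplicity]
    exact Nat.card_congr ((subgroupOfEquivOfLe hSL).trans (subgroupOfEquivOfLe h.1).symm).toEquiv
  exact relIndex_normalizer_eq_card_sylow hSL (Sylow.ofCard _ hcard) rfl

theorem Subgroup.le_of_relIndex_eq [Finite G] {H K L : Subgroup G} (hHK : H ≤ K)
    (hKL : Nat.card K = Nat.card L) (h : H.relIndex K = H.relIndex L) : H ≤ L := by
  have hindex : K.index = L.index :=
    Nat.eq_of_mul_eq_mul_left Nat.card_pos ((card_mul_index K).trans ((card_mul_index L).symm.trans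
      (by rw [hKL])))
  have hHL : (H ⊓ L).index = H.index := by
    rw [← relIndex_mul_index inf_le_right, inf_relIndex_right, ← h, ← hindex,
      relIndex_mul_index hHK]
  have hrel : (H ⊓ L).relIndex H = 1 := by
    have := relIndex_mul_index (inf_le_left : H ⊓ L ≤ H)
    rw [hHL] at this
    exact Nat.eq_of_mul_eq_mul_right (Nat.pos_of_ne_zero index_ne_zero_of_finite)
      (this.trans (one_mul _).symm)
  exact (relIndex_eq_one.mp hrel).trans inf_le_right

end SylowTransfer

theorem Sylow.card_eq_card_of_surjective {G H : Type*} [Group G] [Group H] [Finite G] {p : ℕ}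
    [Fact p.Prime] {f : G →* H} (hf : Function.Surjective f) (hker : IsPGroup p f.ker) :
    Nat.card (Sylow p G) = Nat.card (Sylow p H) := by
  have := Finite.of_surjective f hf
  obtain ⟨P⟩ : Nonempty (Sylow p H) := inferInstance
  let Q := P.comapOfKerIsPGroup f hker (by rw [f.range_eq_top.mpr hf]; exact le_top)
  rw [Q.card_eq_index_normalizer, P.card_eq_index_normalizer]
  change (normalizer ((P : Subgroup H).comap f : Set G)).index =
    (normalizer ((P : Subgroup H) : Set H)).index
  rw [← comap_normalizer_eq_of_surjective _ hf, index_comap_of_surjective _ hf]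

namespace GL23

def transvection : GL23 := ⟨!![1, 1; 0, 1], !![1, 2; 0, 1], by decide, by decide⟩
def diagReflection : GL23 := ⟨!![1, 0; 0, 2], !![1, 0; 0, 2], by decide, by decide⟩
def swap : GL23 := ⟨!![0, 1; 1, 0], !![0, 1; 1, 0], by decide, by decide⟩

theorem card_eq : Nat.card GL23 = 48 := by
  rw [Matrix.card_GL_field]; decide

theorem orderOf_transvection : orderOf transvection = 3 :=
  orderOf_eq_prime (by ext : 1; decide) (fun h => absurd (congrArg Units.val h) (by decide))

theorem card_zpowers_transvection : Nat.card (zpowers transvection) = 3 := by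
  rw [Nat.card_zpowers, orderOf_transvection]

theorem diagReflection_conj_transvection :
    diagReflection * transvection * diagReflection⁻¹ = transvection⁻¹ := by
  ext : 1; decide

theorem diagReflection_mem_normalizer :
    diagReflection ∈ normalizer (zpowers transvection : Set GL23) := by
  refine mem_normalizer_fintype fun _ ⟨k, hk⟩ => ⟨-k, ?_⟩
  simp only [← hk, ← conj_zpow, diagReflection_conj_transvection, inv_zpow']

theorem diagReflection_notMem_zpowers : diagReflection ∉ zpowers transvection :=
  notMem_zpowers_of_not_commute fun h => absurd (congrArg Units.val h) (by decide)

theorem swap_notMem_normalizer : swap ∉ normalizer (zpowers transvection : Set GL23) := by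
  intro h
  refine notMem_zpowers_of_not_commute (g := transvection) (h := swap * transvection * swap⁻¹)
    (fun h => absurd (congrArg Units.val h) (by decide)) ?_
  exact (mem_normalizer_iff.mp h _).mp (mem_zpowers _)

def sylowThree : Sylow 3 GL23 :=
  (IsPGroup.of_card (n := 1) card_zpowers_transvection).toSylow (by
    have h := card_mul_index (zpowers transvection)
    rw [card_zpowers_transvection, card_eq] at h
    omega)

theorem card_sylow_three_eq_index :
    Nat.card (Sylow 3 GL23) = (normalizer (zpowers transvection : Set GL23)).index := by
  rw [sylowThree.card_eq_index_normalizer]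
  rfl

theorem card_sylow_three : Nat.card (Sylow 3 GL23) = 4 := by
  set N := normalizer (zpowers transvection : Set GL23)
  have hmod : N.index % 3 = 1 := card_sylow_three_eq_index ▸ card_sylow_modEq_one 3 GL23
  have hne1 : N.index ≠ 1 := fun h =>
    swap_notMem_normalizer (eq_top_iff.mp (index_eq_one.mp h) (mem_top swap))
  have hne3 : Nat.card N ≠ 3 := fun h =>
    diagReflection_notMem_zpowers <| (eq_of_le_of_card_ge le_normalizer
      (h.trans card_zpowers_transvection.symm).le) ▸ diagReflection_mem_normalizer
  have h3 : Nat.card (zpowers transvection) ∣ Nat.card N := card_dvd_of_le le_normalizer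
  rw [card_zpowers_transvection] at h3
  obtain ⟨m, hm⟩ := h3
  have hmul : 3 * m * N.index = 48 := by rw [← card_eq, ← card_mul_index N, hm]
  have hle : N.index ≤ 48 := Nat.le_of_dvd (by norm_num) (Dvd.intro_left _ hmul)
  rw [card_sylow_three_eq_index]
  interval_cases N.index <;> omega

end GL23

instance : Finite AGL23 := Finite.of_equiv _ SemidirectProduct.equivProd.symm

namespace AGL23

theorem isPGroup_ker_rightHom : IsPGroup 3 (SemidirectProduct.rightHom : AGL23 →* GL23).ker := by
  rw [← SemidirectProduct.range_inl_eq_ker_rightHom]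
  have hV : IsPGroup 3 V23 := IsPGroup.of_card (n := 2) (by rw [Nat.card_eq_fintype_card]; simp)
  exact hV.of_surjective _ (MonoidHom.rangeRestrict_surjective _)

theorem card_sylow_three : Nat.card (Sylow 3 AGL23) = 4 :=
  (Sylow.card_eq_card_of_surjective (G := AGL23) SemidirectProduct.rightHom_surjective
    isPGroup_ker_rightHom).trans GL23.card_sylow_three

theorem card_sylow_three_of_mulEquiv {K : Type*} [Group K] (e : K ≃* AGL23) :
    Nat.card (Sylow 3 K) = 4 :=
  (Sylow.card_eq_card_of_surjective e.symm.surjective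
    (IsPGroup.ker_isPGroup_of_injective (ϕ := e.symm.toMonoidHom) e.symm.injective)).symm.trans
    card_sylow_three

end AGL23

theorem stmt14_general {G : Type*} [Group G] [Finite G] (A B S : Subgroup G)
    (hAB : A ≠ B)
    (hA : Nonempty (↥A ≃* AGL23)) (hB : Nonempty (↥B ≃* AGL23))
    (hS : IsSylow3In S (A ⊓ B))
    (hNZ : Subgroup.normalizer ((Subgroup.map S.subtype (Subgroup.center ↥S) : Subgroup G) : Set G) ≤ A) :
    A ⊓ B = A ⊓ Subgroup.normalizer (S : Set G) ∧ A ⊓ B = B ⊓ Subgroup.normalizer (S : Set G) ∧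
      A ⊓ B = Subgroup.normalizer (S : Set G) := by
  obtain ⟨eA⟩ := hA
  obtain ⟨eB⟩ := hB
  set N := normalizer (S : Set G)
  have hNA : N ≤ A := (normalizer_le_normalizer_map_subtype_center S).trans hNZ
  have hcard : Nat.card B = Nat.card A := Nat.card_congr (eB.trans eA.symm).toEquiv
  have hSB : IsSylow3In S B :=
    hS.of_le_of_inf_normalizer_le inf_le_right (le_inf (inf_le_right.trans hNA) inf_le_left)
  have hrelB : N.relIndex B = 4 :=
    hSB.relIndex_normalizer.trans (AGL23.card_sylow_three_of_mulEquiv eB)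
  have hrelA : N.relIndex A = 4 :=
    (hSB.relIndex_normalizer_of_card_eq (hS.1.trans inf_le_left) hcard).trans
      (AGL23.card_sylow_three_of_mulEquiv eA)
  have hNB : N ≤ B := le_of_relIndex_eq hNA hcard.symm (hrelA.trans hrelB.symm)
  have hmul : N.relIndex (A ⊓ B) * A.relIndex B = 4 := by
    rw [relIndex_inf_mul_relIndex, inf_eq_left.mpr hNA, hrelB]
  have hmod : N.relIndex (A ⊓ B) % 3 = 1 := hS.relIndex_normalizer ▸ card_sylow_modEq_one 3 _
  have hne : A.relIndex B ≠ 1 := fun h =>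
    hAB (eq_of_le_of_card_ge (relIndex_eq_one.mp h) hcard.ge).symm
  have hone : N.relIndex (A ⊓ B) = 1 := by
    have := Nat.le_of_dvd (by norm_num) (Dvd.intro _ hmul)
    interval_cases N.relIndex (A ⊓ B) <;> omega
  have hX : A ⊓ B = N := le_antisymm (relIndex_eq_one.mp hone) (le_inf hNA hNB)
  rw [hX, inf_eq_right.mpr hNA, inf_eq_right.mpr hNB]
  exact ⟨rfl, rfl, rfl⟩

/-- Theorem A setup: if `G = ⟨A,B⟩` is finite, `A ≠ B`, `A ≅ B ≅ AGL₂(3)`,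
`S ∈ Syl₃(A ∩ B)` and `N_G(Z(S)) ≤ A`, then
`A ∩ B = N_A(S) = N_B(S) = N_G(S)`. -/
theorem stmt14 {G : Type*} [Group G] [Finite G] (A B S : Subgroup G)
    (hAB : A ≠ B)
    (hA : Nonempty (↥A ≃* AGL23)) (hB : Nonempty (↥B ≃* AGL23))
    (hgen : A ⊔ B = ⊤)
    (hS : IsSylow3In S (A ⊓ B))
    (hNZ : Subgroup.normalizer ((Subgroup.map S.subtype (Subgroup.center ↥S) : Subgroup G) : Set G) ≤ A) :
    A ⊓ B = A ⊓ Subgroup.normalizer (S : Set G) ∧ A ⊓ B = B ⊓ Subgroup.normalizer (S : Set G) ∧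
      A ⊓ B = Subgroup.normalizer (S : Set G) :=
  stmt14_general A B S hAB hA hB hS hNZ
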